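/- arXiv:2509.08072 — 2 statements merged into one kernel-verified Lean document; each statement's English description precedes it below -/
import Mathlib

section
/- For 0 ≤ θ ≤ 1, c ≥ 1, and p ∈ ℝ³, the matrix ∇v_c^θ(p) is symmetric positive definite, and its determinant satisfies det(∇v_c^θ(p)) ≥ γ_c(p)^{−5}. -/
/-! With `u = p / c` and `γ = γ_c(p)`, the matrix is `a I - b u uᵀ` with `a = θ/γ + (1 - θ)` and
`b = θ/γ³`. Its eigenvalues are `a` (twice, on `u^⊥`) and `a - b|u|² = θ/γ³ + (1 - θ)`, because
`|u|² = γ² - 1`. Each has the form `θ x + (1 - θ)` with `x = γ⁻ᵏ ≤ 1`, so for `θ ≤ 1` it is at least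
`γ⁻ᵏ`; this gives positive definiteness and `det = a² (a - b|u|²) ≥ γ⁻² γ⁻³`. -/

noncomputable section

/-- The relativistic Lorentz factor `γ_c(p) = √(1 + |p|²/c²)`. -/
def gam (c : ℝ) (p : EuclideanSpace ℝ (Fin 3)) : ℝ := Real.sqrt (1 + ‖p‖ ^ 2 / c ^ 2)

/-- The Jacobian of the interpolated velocity
`∇v_c^θ(p) = (θ/γ_c(p) + 1−θ) I₃ − (θ/γ_c(p)³) (p_i p_j / c²)_{i,j}`. -/
def Dv (θ c : ℝ) (p : EuclideanSpace ℝ (Fin 3)) : Matrix (Fin 3) (Fin 3) ℝ :=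
  (θ / gam c p + (1 - θ)) • (1 : Matrix (Fin 3) (Fin 3) ℝ) -
    (θ / (gam c p) ^ 3) • Matrix.of fun i j => p i * p j / c ^ 2

namespace Matrix

theorem det_smul_one_add_vecMulVec {K : Type*} [Field K] {n : ℕ} {a : K} (ha : a ≠ 0)
    (u v : Fin (n + 1) → K) :
    (a • (1 : Matrix (Fin (n + 1)) (Fin (n + 1)) K) + vecMulVec u v).det
      = a ^ n * (a + v ⬝ᵥ u) := by
  have h : a • (1 : Matrix (Fin (n + 1)) (Fin (n + 1)) K) + vecMulVec u v
      = a • (1 + replicateCol Unit (a⁻¹ • u) * replicateRow Unit v) := by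
    rw [← vecMulVec_eq, smul_add, ← smul_vecMulVec, smul_inv_smul₀ ha]
  rw [h, det_smul, det_one_add_replicateCol_mul_replicateRow, Fintype.card_fin,
    dotProduct_smul, smul_eq_mul]
  field_simp
  ring

theorem det_smul_one_sub_smul_vecMulVec {K : Type*} [Field K] {n : ℕ} {a : K} (ha : a ≠ 0)
    (b : K) (u : Fin (n + 1) → K) :
    (a • (1 : Matrix (Fin (n + 1)) (Fin (n + 1)) K) - b • vecMulVec u u).det
      = a ^ n * (a - b * (u ⬝ᵥ u)) := by
  rw [sub_eq_add_neg, ← neg_smul, ← smul_vecMulVec, det_smul_one_add_vecMulVec ha,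
    dotProduct_smul, smul_eq_mul, neg_mul, sub_eq_add_neg]

theorem posDef_smul_one_sub_smul_vecMulVec {n : Type*} [Fintype n] [DecidableEq n]
    {a b : ℝ} {u : n → ℝ} (ha : 0 < a) (hab : 0 < a - b * (u ⬝ᵥ u)) :
    (a • (1 : Matrix n n ℝ) - b • vecMulVec u u).PosDef := by
  refine posDef_iff_dotProduct_mulVec.mpr ⟨?_, fun x hx => ?_⟩
  · simp [isHermitian_iff_isSymm, IsSymm, transpose_vecMulVec]
  have hxx : 0 < x ⬝ᵥ x := by simpa using dotProduct_star_self_pos_iff.mpr hx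
  have hquad : star x ⬝ᵥ ((a • 1 - b • vecMulVec u u) *ᵥ x)
      = a * (x ⬝ᵥ x) - b * (u ⬝ᵥ x) ^ 2 := by
    simp only [sub_mulVec, smul_mulVec, vecMulVec_mulVec, one_mulVec]
    rw [star_trivial, dotProduct_sub, dotProduct_smul, dotProduct_smul, op_smul_eq_smul,
      dotProduct_smul, dotProduct_comm x u, smul_eq_mul, smul_eq_mul, smul_eq_mul]
    ring
  have hCS : (u ⬝ᵥ x) ^ 2 ≤ (u ⬝ᵥ u) * (x ⬝ᵥ x) := by
    simpa [dotProduct, sq] using Finset.sum_mul_sq_le_sq_mul_sq Finset.univ u x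
  rw [hquad]
  rcases le_or_gt 0 b with hb | hb
  · nlinarith [mul_le_mul_of_nonneg_left hCS hb, mul_pos hab hxx]
  · nlinarith [sq_nonneg (u ⬝ᵥ x), mul_pos ha hxx]

end Matrix

theorem inv_le_div_add_one_sub {θ t : ℝ} (hθ : θ ≤ 1) (ht : 1 ≤ t) :
    t⁻¹ ≤ θ / t + (1 - θ) := by
  rw [← sub_nonneg, show θ / t + (1 - θ) - t⁻¹ = (1 - θ) * (1 - t⁻¹) by ring]
  exact mul_nonneg (sub_nonneg.mpr hθ) (sub_nonneg.mpr (inv_le_one_of_one_le₀ ht))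

theorem one_le_gam (c : ℝ) (p : EuclideanSpace ℝ (Fin 3)) : 1 ≤ gam c p :=
  Real.one_le_sqrt.mpr (le_add_of_nonneg_right (by positivity))

theorem gam_sq (c : ℝ) (p : EuclideanSpace ℝ (Fin 3)) : gam c p ^ 2 = 1 + ‖p‖ ^ 2 / c ^ 2 :=
  Real.sq_sqrt (by positivity)

theorem Dv_eq_smul_one_sub_smul_vecMulVec (θ c : ℝ) (p : EuclideanSpace ℝ (Fin 3)) :
    Dv θ c p = (θ / gam c p + (1 - θ)) • 1
      - (θ / gam c p ^ 3) • Matrix.vecMulVec (fun i => p i / c) (fun i => p i / c) := by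
  ext i j
  simp [Dv, Matrix.vecMulVec_apply, div_mul_div_comm, sq]

theorem dotProduct_div_self_eq_gam_sq_sub_one (c : ℝ) (p : EuclideanSpace ℝ (Fin 3)) :
    (fun i => p i / c) ⬝ᵥ (fun i => p i / c) = gam c p ^ 2 - 1 := by
  rw [gam_sq, EuclideanSpace.norm_sq_eq, Finset.sum_div]
  simp [dotProduct, div_mul_div_comm, sq]

theorem stmt6_general (θ c : ℝ) (hθ1 : θ ≤ 1)
    (p : EuclideanSpace ℝ (Fin 3)) :
    (Dv θ c p).IsSymm ∧ (Dv θ c p).PosDef ∧ (Dv θ c p).det ≥ (gam c p) ^ (-5 : ℤ) := by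
  set γ := gam c p
  set u : Fin 3 → ℝ := fun i => p i / c
  have hγ : 1 ≤ γ := one_le_gam c p
  have hγ0 : 0 < γ := one_pos.trans_le hγ
  have ha : γ⁻¹ ≤ θ / γ + (1 - θ) := inv_le_div_add_one_sub hθ1 hγ
  have ha0 : 0 < θ / γ + (1 - θ) := (inv_pos.2 hγ0).trans_le ha
  have hm : (γ ^ 3)⁻¹ ≤ θ / γ + (1 - θ) - θ / γ ^ 3 * (u ⬝ᵥ u) := by
    have hlow : θ / γ + (1 - θ) - θ / γ ^ 3 * (u ⬝ᵥ u) = θ / γ ^ 3 + (1 - θ) := by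
      rw [dotProduct_div_self_eq_gam_sq_sub_one]
      field_simp
      ring
    exact hlow ▸ inv_le_div_add_one_sub hθ1 (one_le_pow₀ hγ)
  have hpos : (Dv θ c p).PosDef := by
    rw [Dv_eq_smul_one_sub_smul_vecMulVec]
    exact Matrix.posDef_smul_one_sub_smul_vecMulVec ha0
      ((inv_pos.2 (by positivity)).trans_le hm)
  refine ⟨Matrix.isHermitian_iff_isSymm.mp hpos.isHermitian, hpos, ?_⟩
  rw [Dv_eq_smul_one_sub_smul_vecMulVec, ge_iff_le,
    Matrix.det_smul_one_sub_smul_vecMulVec ha0.ne']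
  calc γ ^ (-5 : ℤ) = γ⁻¹ ^ 2 * (γ ^ 3)⁻¹ := by
        rw [zpow_neg]; norm_cast; field_simp
    _ ≤ _ := by gcongr

/-- `∇v_c^θ(p)` is symmetric positive definite and its determinant is at least `γ_c(p)⁻⁵`. -/
theorem stmt6 (θ c : ℝ) (hθ0 : 0 ≤ θ) (hθ1 : θ ≤ 1) (hc : 1 ≤ c)
    (p : EuclideanSpace ℝ (Fin 3)) :
    (Dv θ c p).IsSymm ∧ (Dv θ c p).PosDef ∧ (Dv θ c p).det ≥ (gam c p) ^ (-5 : ℤ) :=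
  stmt6_general θ c hθ1 p
end
end

section
/- Let g : ℝ⁶ → [0,∞) be continuously differentiable, and let W, W' : ℝ⁶ → ℝ⁶ be volume-preserving C¹ diffeomorphisms with ‖W(z) − W'(z)‖_∞ ≤ δ for all z and ‖∇(W^θ) − I₆‖ ≤ 1/2 where W^θ = θW + (1−θ)W' for all θ ∈ [0,1]. Then ‖g∘W − g∘W'‖_{L¹(ℝ⁶)} ≤ C δ ‖∇g‖_{L¹(ℝ⁶)} for an absolute constant C. -/
/-! Along the segment `W^θ z = θ • W z + (1 - θ) • W' z`, the fundamental theorem of calculus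
gives `‖g (W z) - g (W' z)‖ ≤ δ ∫₀¹ ‖Dg (W^θ z)‖ dθ`. After exchanging the integrals, each
`θ`-slice is `∫ ‖Dg‖ ∘ W^θ`. Since `‖DW^θ - 1‖ ≤ r < 1`, the map `W^θ` is injective and
`|det DW^θ| ≥ (1 - r)ⁿ` (a linear map within `r` of the identity maps the unit ball onto a set
containing the ball of radius `1 - r`), so the change of variables formula bounds each slice by
`(1 - r)⁻ⁿ ‖Dg‖_{L¹}`. For `n = 6` and `r = 1/2` this gives the constant `64`. -/

open MeasureTheory Metric Module Set

section

variable {E : Type*} [NormedAddCommGroup E] [NormedSpace ℝ E]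

theorem mul_norm_sub_le_norm_sub_of_norm_fderiv_sub_id_le {F : E → E} (hF : Differentiable ℝ F)
    {r : ℝ} (hr : ∀ z, ‖fderiv ℝ F z - ContinuousLinearMap.id ℝ E‖ ≤ r) (x y : E) :
    (1 - r) * ‖x - y‖ ≤ ‖F x - F y‖ := by
  have hG : ∀ z ∈ univ, DifferentiableAt ℝ (fun w => F w - w) z :=
    fun z _ => (hF z).sub differentiableAt_id
  have hG' : ∀ z ∈ univ, ‖fderiv ℝ (fun w => F w - w) z‖ ≤ r := fun z _ => by
    rw [fderiv_fun_sub (hF z) differentiableAt_fun_id, fderiv_fun_id]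
    exact hr z
  have hGlip := convex_univ.norm_image_sub_le_of_norm_fderiv_le hG hG' (mem_univ y) (mem_univ x)
  have hsplit : ‖x - y‖ ≤ ‖F x - F y‖ + ‖(F x - x) - (F y - y)‖ := by
    rw [show x - y = (F x - F y) - ((F x - x) - (F y - y)) by abel]
    exact norm_sub_le _ _
  linarith

theorem injective_of_norm_fderiv_sub_id_le {F : E → E} (hF : Differentiable ℝ F) {r : ℝ}
    (hr1 : r < 1) (hr : ∀ z, ‖fderiv ℝ F z - ContinuousLinearMap.id ℝ E‖ ≤ r) :
    Function.Injective F := by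
  intro x y hxy
  have := mul_norm_sub_le_norm_sub_of_norm_fderiv_sub_id_le hF hr x y
  rw [hxy, sub_self, norm_zero] at this
  have : ‖x - y‖ ≤ 0 := nonpos_of_mul_nonpos_right this (by linarith)
  exact sub_eq_zero.mp (norm_le_zero_iff.mp this)

theorem ContinuousLinearMap.pow_le_abs_det_of_norm_sub_id_le [FiniteDimensional ℝ E]
    {A : E →L[ℝ] E} {r : ℝ} (hr1 : r < 1) (hA : ‖A - ContinuousLinearMap.id ℝ E‖ ≤ r) :
    (1 - r) ^ finrank ℝ E ≤ |A.det| := by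
  borelize E
  set μ : Measure E := Measure.addHaar
  have hA' : ∀ z, ‖fderiv ℝ A z - ContinuousLinearMap.id ℝ E‖ ≤ r := fun z => by
    rwa [A.fderiv]
  have hsurj : Function.Surjective A := LinearMap.injective_iff_surjective.mp
    (injective_of_norm_fderiv_sub_id_le A.differentiable hr1 hA')
  have hball : closedBall 0 (1 - r) ⊆ A '' closedBall 0 1 := by
    intro y hy
    obtain ⟨x, rfl⟩ := hsurj y
    refine ⟨x, mem_closedBall_zero_iff.mpr ?_, rfl⟩
    have := mul_norm_sub_le_norm_sub_of_norm_fderiv_sub_id_le A.differentiable hA' x 0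
    rw [mem_closedBall_zero_iff] at hy
    simp only [sub_zero, map_zero] at this
    nlinarith
  have hvol := measure_mono (μ := μ) hball
  rw [Measure.addHaar_image_continuousLinearMap,
    Measure.addHaar_closedBall' μ 0 (by linarith)] at hvol
  have := (ENNReal.mul_le_mul_iff_left (measure_closedBall_pos μ 0 one_pos).ne'
    measure_closedBall_lt_top.ne).mp hvol
  exact (ENNReal.ofReal_le_ofReal_iff (abs_nonneg _)).mp this

theorem lintegral_comp_le_of_norm_fderiv_sub_id_le [FiniteDimensional ℝ E] [MeasurableSpace E]
    [BorelSpace E] (μ : Measure E) [μ.IsAddHaarMeasure] {F : E → E} (hF : Differentiable ℝ F)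
    {r : ℝ} (hr1 : r < 1) (hr : ∀ z, ‖fderiv ℝ F z - ContinuousLinearMap.id ℝ E‖ ≤ r)
    (u : E → ENNReal) :
    ENNReal.ofReal ((1 - r) ^ finrank ℝ E) * ∫⁻ z, u (F z) ∂μ ≤ ∫⁻ z, u z ∂μ := by
  have hcov := lintegral_image_eq_lintegral_abs_det_fderiv_mul μ MeasurableSet.univ
    (fun z _ => (hF z).hasFDerivAt.hasFDerivWithinAt)
    (injective_of_norm_fderiv_sub_id_le hF hr1 hr).injOn u
  rw [Measure.restrict_univ] at hcov
  calc ENNReal.ofReal ((1 - r) ^ finrank ℝ E) * ∫⁻ z, u (F z) ∂μ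
      = ∫⁻ z, ENNReal.ofReal ((1 - r) ^ finrank ℝ E) * u (F z) ∂μ :=
        (lintegral_const_mul' _ _ ENNReal.ofReal_ne_top).symm
    _ ≤ ∫⁻ z, ENNReal.ofReal |(fderiv ℝ F z).det| * u (F z) ∂μ := by
        gcongr with z
        exact (fderiv ℝ F z).pow_le_abs_det_of_norm_sub_id_le hr1 (hr z)
    _ = ∫⁻ z in F '' univ, u z ∂μ := hcov.symm
    _ ≤ ∫⁻ z, u z ∂μ := setLIntegral_le_lintegral _ _

theorem enorm_sub_le_lintegral_enorm_fderiv_segment {G : Type*} [NormedAddCommGroup G]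
    [NormedSpace ℝ G] [CompleteSpace G] {g : E → G} (hg : ContDiff ℝ 1 g) (a b : E) :
    ‖g a - g b‖ₑ ≤ ‖a - b‖ₑ * ∫⁻ θ in Ioc (0 : ℝ) 1, ‖fderiv ℝ g (θ • a + (1 - θ) • b)‖ₑ := by
  set p : ℝ → E := fun θ => θ • a + (1 - θ) • b
  have hp : ∀ θ, HasDerivAt p (a - b) θ := fun θ => by
    convert ((hasDerivAt_id θ).smul_const (a - b)).const_add b using 1
    · ext t
      simp only [p, id, sub_smul, smul_sub, one_smul]
      abel
    · simp
  have hg' : Continuous fun θ => fderiv ℝ g (p θ) :=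
    (hg.continuous_fderiv one_ne_zero).comp (by fun_prop)
  have hftc : ∫ θ in (0 : ℝ)..1, fderiv ℝ g (p θ) (a - b) = g a - g b := by
    rw [intervalIntegral.integral_eq_sub_of_hasDerivAt
      (fun θ _ => ((hg.differentiable one_ne_zero (p θ)).hasFDerivAt).comp_hasDerivAt θ (hp θ))
      ((hg'.clm_apply continuous_const).intervalIntegrable 0 1)]
    simp [p]
  calc ‖g a - g b‖ₑ
      = ‖∫ θ in Ioc (0 : ℝ) 1, fderiv ℝ g (p θ) (a - b)‖ₑ := by
        rw [← hftc, intervalIntegral.integral_of_le zero_le_one]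
    _ ≤ ∫⁻ θ in Ioc (0 : ℝ) 1, ‖fderiv ℝ g (p θ) (a - b)‖ₑ := enorm_integral_le_lintegral_enorm _
    _ ≤ ∫⁻ θ in Ioc (0 : ℝ) 1, ‖a - b‖ₑ * ‖fderiv ℝ g (p θ)‖ₑ := by
        gcongr with θ
        rw [mul_comm]
        exact (fderiv ℝ g (p θ)).le_opENorm _
    _ = ‖a - b‖ₑ * ∫⁻ θ in Ioc (0 : ℝ) 1, ‖fderiv ℝ g (p θ)‖ₑ :=
        lintegral_const_mul' _ _ enorm_ne_top

variable [FiniteDimensional ℝ E] [MeasurableSpace E] [BorelSpace E] (μ : Measure E)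
  [μ.IsAddHaarMeasure] {G : Type*} [NormedAddCommGroup G] [NormedSpace ℝ G] [CompleteSpace G]
  {g : E → G} {W W' : E → E} {δ r : ℝ}

theorem lintegral_enorm_comp_sub_comp_le (hg : ContDiff ℝ 1 g) (hW : Differentiable ℝ W)
    (hW' : Differentiable ℝ W') (hδ : ∀ z, ‖W z - W' z‖ ≤ δ) (hr1 : r < 1)
    (hr : ∀ θ ∈ Icc (0 : ℝ) 1, ∀ z, ‖fderiv ℝ (fun y => θ • W y + (1 - θ) • W' y) z -
      ContinuousLinearMap.id ℝ E‖ ≤ r) :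
    ENNReal.ofReal ((1 - r) ^ finrank ℝ E) * ∫⁻ z, ‖g (W z) - g (W' z)‖ₑ ∂μ ≤
      ENNReal.ofReal δ * ∫⁻ z, ‖fderiv ℝ g z‖ₑ ∂μ := by
  set c := ENNReal.ofReal ((1 - r) ^ finrank ℝ E)
  have hWc := hW.continuous
  have hW'c := hW'.continuous
  have hjoint : Measurable (Function.uncurry fun z (θ : ℝ) =>
      ‖fderiv ℝ g (θ • W z + (1 - θ) • W' z)‖ₑ) :=
    ((hg.continuous_fderiv one_ne_zero).enorm.comp (by fun_prop)).measurable
  calc c * ∫⁻ z, ‖g (W z) - g (W' z)‖ₑ ∂μ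
      ≤ c * ∫⁻ z, ENNReal.ofReal δ *
          (∫⁻ θ in Ioc (0 : ℝ) 1, ‖fderiv ℝ g (θ • W z + (1 - θ) • W' z)‖ₑ) ∂μ := by
        gcongr with z
        refine (enorm_sub_le_lintegral_enorm_fderiv_segment hg _ _).trans ?_
        gcongr
        rw [← ofReal_norm]
        exact ENNReal.ofReal_le_ofReal (hδ z)
    _ = ENNReal.ofReal δ *
          ∫⁻ θ in Ioc (0 : ℝ) 1, c * ∫⁻ z, ‖fderiv ℝ g (θ • W z + (1 - θ) • W' z)‖ₑ ∂μ := by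
        rw [lintegral_const_mul' (ENNReal.ofReal δ) _ ENNReal.ofReal_ne_top,
          lintegral_lintegral_swap hjoint.aemeasurable,
          lintegral_const_mul' c _ ENNReal.ofReal_ne_top, mul_left_comm]
    _ ≤ ENNReal.ofReal δ * ∫⁻ θ in Ioc (0 : ℝ) 1, ∫⁻ z, ‖fderiv ℝ g z‖ₑ ∂μ := by
        gcongr ENNReal.ofReal δ * ?_
        refine setLIntegral_mono' measurableSet_Ioc fun θ hθ => ?_
        exact lintegral_comp_le_of_norm_fderiv_sub_id_le μ
          ((hW.const_smul θ).add (hW'.const_smul (1 - θ))) hr1 (hr θ (Ioc_subset_Icc_self hθ)) _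
    _ = ENNReal.ofReal δ * ∫⁻ z, ‖fderiv ℝ g z‖ₑ ∂μ := by
        simp [Real.volume_Ioc]

theorem integral_norm_comp_sub_comp_le (hg : ContDiff ℝ 1 g) (hW : Differentiable ℝ W)
    (hW' : Differentiable ℝ W') (hδ : ∀ z, ‖W z - W' z‖ ≤ δ) (hr1 : r < 1)
    (hr : ∀ θ ∈ Icc (0 : ℝ) 1, ∀ z, ‖fderiv ℝ (fun y => θ • W y + (1 - θ) • W' y) z -
      ContinuousLinearMap.id ℝ E‖ ≤ r)
    (hint : Integrable (fun z => ‖fderiv ℝ g z‖) μ) :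
    ∫ z, ‖g (W z) - g (W' z)‖ ∂μ ≤ ((1 - r) ^ finrank ℝ E)⁻¹ * δ * ∫ z, ‖fderiv ℝ g z‖ ∂μ := by
  have hc : 0 < (1 - r) ^ finrank ℝ E := pow_pos (by linarith) _
  have hδ0 : 0 ≤ δ := (norm_nonneg _).trans (hδ 0)
  have hmain := lintegral_enorm_comp_sub_comp_le μ hg hW hW' hδ hr1 hr
  have hfin : ∫⁻ z, ‖fderiv ℝ g z‖ₑ ∂μ ≠ ⊤ := by
    simpa using hint.hasFiniteIntegral.ne
  have hdiff : Continuous fun z => g (W z) - g (W' z) :=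
    (hg.continuous.comp hW.continuous).sub (hg.continuous.comp hW'.continuous)
  rw [integral_norm_eq_lintegral_enorm hdiff.aestronglyMeasurable,
    integral_norm_eq_lintegral_enorm (hg.continuous_fderiv one_ne_zero).aestronglyMeasurable,
    mul_assoc, le_inv_mul_iff₀ hc]
  simpa [ENNReal.toReal_mul, hc.le, hδ0] using
    ENNReal.toReal_mono (ENNReal.mul_ne_top ENNReal.ofReal_ne_top hfin) hmain

end

/-- Abstract interpolation-of-flows estimate: if `W, W'` are volume-preserving `C¹`
diffeomorphisms of `ℝ⁶` that are uniformly `δ`-close and whose convex interpolants have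
Jacobians within `1/2` of the identity, then `‖g∘W − g∘W'‖_{L¹} ≤ C δ ‖∇g‖_{L¹}`. -/
theorem stmt19 :
    ∃ C > 0, ∀ (g : EuclideanSpace ℝ (Fin 6) → ℝ)
      (W W' : EuclideanSpace ℝ (Fin 6) → EuclideanSpace ℝ (Fin 6)) (δ : ℝ),
      (∀ z, 0 ≤ g z) → ContDiff ℝ 1 g →
      ContDiff ℝ 1 W → ContDiff ℝ 1 W' →
      Function.Bijective W → Function.Bijective W' →
      MeasurePreserving W volume volume → MeasurePreserving W' volume volume →
      (∀ z, ‖W z - W' z‖ ≤ δ) →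
      (∀ θ ∈ Set.Icc (0 : ℝ) 1, ∀ z,
        ‖fderiv ℝ (fun y => θ • W y + (1 - θ) • W' y) z -
          ContinuousLinearMap.id ℝ (EuclideanSpace ℝ (Fin 6))‖ ≤ 1 / 2) →
      Integrable (fun z => ‖fderiv ℝ g z‖) →
      (∫ z, |g (W z) - g (W' z)|) ≤ C * δ * ∫ z, ‖fderiv ℝ g z‖ := by
  refine ⟨64, by norm_num, fun g W W' δ _ hg hW hW' _ _ _ _ hδ hr hint => ?_⟩
  have h := integral_norm_comp_sub_comp_le volume hg (hW.differentiable one_ne_zero)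
    (hW'.differentiable one_ne_zero) hδ (by norm_num) hr hint
  norm_num [finrank_euclideanSpace_fin] at h
  exact h
end
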